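/- For any odd positive integers w1, w2, w3, any complex numbers y1, y2, and any nonnegative integer n, the quantity Σ_{k+l+m=n} (n choose k,l,m) E_{k,χ}(w_{σ(1)} y1) E_{l,χ}(w_{σ(2)} y2) T_m(w_{σ(3)} d − 1, χ) w_{σ(1)}^{l+m} w_{σ(2)}^{k+m} w_{σ(3)}^{k+l} is the same for all six permutations σ of {1,2,3}. -/

import Mathlib

open Finset

/-- The formal exponential power series `e^{ct} = Σ cⁿ tⁿ/n!` in `ℂ[[t]]`. -/
noncomputable def expPS (c : ℂ) : PowerSeries ℂ :=
  PowerSeries.mk fun n => c ^ n / n.factorial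

/-- `Σ_{a=0}^{d-1} (-1)^a χ(a) e^{at}` as a formal power series. -/
noncomputable def altSum (χ : ℤ → ℂ) (d : ℕ) : PowerSeries ℂ :=
  ∑ a ∈ Finset.range d, ((-1 : ℂ) ^ a * χ (a : ℤ)) • expPS (a : ℂ)

/-- `E` is the family of generalized Euler polynomials attached to `χ` mod `d`:
`(Σ_{n≥0} E_{n,χ}(x) tⁿ/n!) · (e^{dt}+1) = 2 e^{xt} · Σ_{a=0}^{d-1} (-1)^a χ(a) e^{at}`. -/
def IsGenEuler (d : ℕ) (χ : ℤ → ℂ) (E : ℕ → ℂ → ℂ) : Prop :=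
  ∀ x : ℂ, (PowerSeries.mk fun n => E n x / n.factorial) * (expPS (d : ℂ) + 1)
    = (2 : PowerSeries ℂ) * expPS x * altSum χ d

/-- The alternating generalized power sum `T_k(n,χ) = Σ_{a=0}^{n} (-1)^a χ(a) a^k`
(with the convention `0^0 = 1`). -/
noncomputable def altPowSum (χ : ℤ → ℂ) (k n : ℕ) : ℂ :=
  ∑ a ∈ Finset.range (n + 1), (-1 : ℂ) ^ a * χ (a : ℤ) * (a : ℂ) ^ k

/-- The multinomial coefficient `(k+l+m)! / (k! l! m!)`. -/
def multinom (k l m : ℕ) : ℕ :=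
  (k + l + m).factorial / (k.factorial * l.factorial * m.factorial)

/-! The triple sum with weights `(a, b, c)` is `n!` times the `n`-th coefficient of
`F(bct) · G(act) · T(abt)`, where `F`, `G` are the exponential generating functions of the
Euler polynomials at `a y₁`, `b y₂` and `T` that of `T_m(cd - 1, χ)`. Multiplying by
`(e^{bcdt} + 1)(e^{acdt} + 1)(e^{abdt} + 1)` clears every denominator: the Euler factors by their
defining identity, and `T` because, for odd `c`, the alternating sum over `[0, cd)` is
`(e^{cdt} + 1)/(e^{dt} + 1)` times the one over `[0, d)`. Both the multiplier and the product it
produces are symmetric in `(a, b, c)`, hence so is the triple sum. -/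

open PowerSeries
open scoped Nat

lemma expPS_eq_rescale_exp (c : ℂ) : expPS c = rescale c (exp ℂ) := by
  ext n
  simp [expPS, coeff_rescale, coeff_exp, div_eq_mul_inv]

lemma expPS_add (a b : ℂ) : expPS (a + b) = expPS a * expPS b := by
  simp only [expPS_eq_rescale_exp, exp_mul_exp_eq_exp_add]

lemma expPS_pow (a : ℂ) (k : ℕ) : expPS a ^ k = expPS (k * a) := by
  rw [expPS_eq_rescale_exp, ← map_pow, exp_pow_eq_rescale_exp, rescale_rescale,
    expPS_eq_rescale_exp]

lemma rescale_expPS (c a : ℂ) : rescale c (expPS a) = expPS (a * c) := by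
  rw [expPS_eq_rescale_exp, rescale_rescale, expPS_eq_rescale_exp]

lemma constantCoeff_expPS (a : ℂ) : constantCoeff (expPS a) = 1 := by
  simp [expPS]

noncomputable def egf (f : ℕ → ℂ) : PowerSeries ℂ :=
  mk fun n => f n / n !

lemma egf_altPowSum (χ : ℤ → ℂ) {m : ℕ} (hm : 0 < m) :
    egf (fun k => altPowSum χ k (m - 1)) = altSum χ m := by
  ext k
  simp only [egf, coeff_mk, altPowSum, altSum, Nat.sub_add_cancel hm, map_sum,
    LinearMap.map_smul, sum_div]
  refine sum_congr rfl fun a _ => ?_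
  simp [expPS, smul_eq_mul, mul_div_assoc]

section AltSum

variable {χ : ℤ → ℂ} {d : ℕ}

/-- Splitting `[0, m d)` into blocks of length `d`: periodicity of `χ` and oddness of `d` turn
the `j`-th block into `(-e^{dt})^j` times the first. -/
lemma altSum_mul (hd : Odd d) (hper : Function.Periodic χ d) (m : ℕ) :
    altSum χ (m * d) = (∑ j ∈ range m, (-expPS d) ^ j) * altSum χ d := by
  induction m with
  | zero => simp [altSum]
  | succ m ih =>
    rw [add_mul, one_mul, altSum, sum_range_add, ← altSum, ih, sum_range_succ, add_mul,
      altSum, mul_sum, mul_sum]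
    congr 1
    refine sum_congr rfl fun b _ => ?_
    have hχ : χ ((m * d + b : ℕ) : ℤ) = χ b := by
      rw [Nat.cast_add, add_comm, Nat.cast_mul]
      exact hper.nat_mul m b
    have hsign : (-1 : ℂ) ^ (m * d + b) = (-1) ^ m * (-1) ^ b := by
      rw [pow_add, pow_mul', hd.neg_one_pow]
    have hexp : expPS ((m * d + b : ℕ) : ℂ) = expPS d ^ m * expPS b := by
      rw [expPS_pow, ← expPS_add]
      push_cast
      ring_nf
    rw [hχ, hsign, hexp, neg_pow]
    simp only [smul_eq_C_mul, map_mul, map_pow, map_neg, map_one]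
    ring

lemma geom_sum_neg_mul_add_one {R : Type*} [CommRing R] (x : R) {m : ℕ} (hm : Odd m) :
    (∑ j ∈ range m, (-x) ^ j) * (x + 1) = x ^ m + 1 := by
  have h := geom_sum_mul (-x) m
  rw [hm.neg_pow] at h
  linear_combination -h

lemma altSum_mul_mul_expPS_add_one (hd : Odd d) (hper : Function.Periodic χ d) {m : ℕ}
    (hm : Odd m) :
    altSum χ (m * d) * (expPS d + 1) = (expPS (m * d) + 1) * altSum χ d := by
  rw [altSum_mul hd hper, mul_right_comm, geom_sum_neg_mul_add_one _ hm, expPS_pow]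

lemma rescale_egf_altPowSum_mul (hd : Odd d) (hper : Function.Periodic χ d) {c : ℕ}
    (hc : Odd c) (s : ℂ) :
    rescale s (egf fun k => altPowSum χ k (c * d - 1)) * (expPS (d * s) + 1)
      = (expPS (c * d * s) + 1) * rescale s (altSum χ d) := by
  rw [egf_altPowSum χ (Nat.mul_pos hc.pos hd.pos)]
  simpa only [map_mul, map_add, map_one, rescale_expPS, Nat.cast_mul]
    using congrArg (rescale s) (altSum_mul_mul_expPS_add_one hd hper hc)

end AltSum

lemma IsGenEuler.rescale_egf_mul {d : ℕ} {χ : ℤ → ℂ} {E : ℕ → ℂ → ℂ} (hE : IsGenEuler d χ E)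
    (x s : ℂ) :
    rescale s (egf fun k => E k x) * (expPS (d * s) + 1)
      = 2 * expPS (x * s) * rescale s (altSum χ d) := by
  simpa only [egf, map_mul, map_add, map_one, map_ofNat, rescale_expPS]
    using congrArg (rescale s) (hE x)

lemma multinom_mul_factorial (k l m : ℕ) :
    multinom k l m * (k ! * l ! * m !) = (k + l + m)! :=
  Nat.div_mul_cancel <| (Nat.mul_dvd_mul_right (Nat.factorial_mul_factorial_dvd_factorial_add k l)
    _).trans (Nat.factorial_mul_factorial_dvd_factorial_add (k + l) m)

lemma coeff_mul_mul {R : Type*} [CommSemiring R] (f g h : PowerSeries R) (n : ℕ) :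
    coeff n (f * (g * h)) = ∑ k ∈ range (n + 1), ∑ l ∈ range (n + 1 - k),
      coeff k f * (coeff l g * coeff (n - k - l) h) := by
  rw [coeff_mul, Nat.sum_antidiagonal_eq_sum_range_succ_mk]
  refine sum_congr rfl fun k hk => ?_
  rw [coeff_mul, Nat.sum_antidiagonal_eq_sum_range_succ_mk, mul_sum,
    show (n - k).succ = n + 1 - k by have := mem_range.mp hk; omega]

lemma tripleSum_eq_coeff (F G T : ℕ → ℂ) (a b c n : ℕ) :
    (∑ k ∈ range (n + 1), ∑ l ∈ range (n + 1 - k),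
      (multinom k l (n - k - l) : ℂ) * F k * G l * T (n - k - l) *
        (a : ℂ) ^ (l + (n - k - l)) * (b : ℂ) ^ (k + (n - k - l)) * (c : ℂ) ^ (k + l))
    = n ! * coeff n (rescale (b * c : ℂ) (egf F) *
        (rescale (a * c : ℂ) (egf G) * rescale (a * b : ℂ) (egf T))) := by
  rw [coeff_mul_mul, mul_sum]
  refine sum_congr rfl fun k hk => ?_
  rw [mul_sum]
  refine sum_congr rfl fun l hl => ?_
  simp only [egf, coeff_rescale, coeff_mk]
  have hn : k + l + (n - k - l) = n := by
    have := mem_range.mp hk; have := mem_range.mp hl; omega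
  have hfac : (multinom k l (n - k - l) : ℂ) * (k ! * l ! * (n - k - l)!) = n ! := by
    exact_mod_cast hn ▸ multinom_mul_factorial k l (n - k - l)
  rw [← hfac]
  field_simp [Nat.factorial_ne_zero]
  ring

noncomputable def eulerDenom (d a b c : ℕ) : PowerSeries ℂ :=
  (expPS (d * (b * c)) + 1) * ((expPS (d * (a * c)) + 1) * (expPS (d * (a * b)) + 1))

noncomputable def eulerNumer (χ : ℤ → ℂ) (d : ℕ) (y1 y2 : ℂ) (a b c : ℕ) : PowerSeries ℂ :=
  (2 * expPS (a * y1 * (b * c)) * rescale (b * c : ℂ) (altSum χ d)) *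
    ((2 * expPS (b * y2 * (a * c)) * rescale (a * c : ℂ) (altSum χ d)) *
      ((expPS (c * d * (a * b)) + 1) * rescale (a * b : ℂ) (altSum χ d)))

lemma constantCoeff_eulerDenom (d a b c : ℕ) : constantCoeff (eulerDenom d a b c) = 8 := by
  simp only [eulerDenom, map_mul, map_add, map_one, constantCoeff_expPS]
  norm_num

lemma egf_triple_eq_eulerNumer_mul_inv {d : ℕ} (hd : Odd d) {χ : ℤ → ℂ}
    (hper : Function.Periodic χ d) {E : ℕ → ℂ → ℂ} (hE : IsGenEuler d χ E) (y1 y2 : ℂ)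
    (a b : ℕ) {c : ℕ} (hc : Odd c) :
    rescale (b * c : ℂ) (egf fun k => E k (a * y1)) *
        (rescale (a * c : ℂ) (egf fun l => E l (b * y2)) *
          rescale (a * b : ℂ) (egf fun m => altPowSum χ m (c * d - 1)))
      = eulerNumer χ d y1 y2 a b c * (eulerDenom d a b c)⁻¹ := by
  rw [eq_mul_inv_iff_mul_eq (by rw [constantCoeff_eulerDenom]; norm_num), eulerDenom,
    eulerNumer, ← hE.rescale_egf_mul, ← hE.rescale_egf_mul,
    ← rescale_egf_altPowSum_mul hd hper hc]
  ring

lemma apply_perm_fin_three {α β : Type*} (f : β → β → β → α)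
    (h12 : ∀ a b c, f a b c = f b a c) (h23 : ∀ a b c, f a b c = f a c b)
    (w : Fin 3 → β) (σ : Equiv.Perm (Fin 3)) :
    f (w (σ 0)) (w (σ 1)) (w (σ 2)) = f (w 0) (w 1) (w 2) := by
  have hσ : (σ 0, σ 1, σ 2) ∈
      [(0, 1, 2), (1, 0, 2), (0, 2, 1), (1, 2, 0), (2, 0, 1), (2, 1, 0)] := by
    revert σ; decide
  simp only [List.mem_cons, Prod.mk.injEq, List.not_mem_nil, or_false] at hσ
  rcases hσ with ⟨h0, h1, h2⟩ | ⟨h0, h1, h2⟩ | ⟨h0, h1, h2⟩ | ⟨h0, h1, h2⟩ | ⟨h0, h1, h2⟩ |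
    ⟨h0, h1, h2⟩ <;> rw [h0, h1, h2]
  · exact h12 ..
  · exact h23 ..
  · exact (h23 ..).trans (h12 ..)
  · exact (h12 ..).trans (h23 ..)
  · exact (h12 ..).trans ((h23 ..).trans (h12 ..))

theorem stmt_1_general (d : ℕ) (hd : Odd d) (χ : ℤ → ℂ)
    (hper : ∀ a : ℤ, χ (a + d) = χ a)
    (E : ℕ → ℂ → ℂ) (hE : IsGenEuler d χ E)
    (w : Fin 3 → ℕ) (hwodd : ∀ i, Odd (w i))
    (y1 y2 : ℂ) (n : ℕ) (σ : Equiv.Perm (Fin 3)) :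
    (∑ k ∈ range (n + 1), ∑ l ∈ range (n + 1 - k),
      (multinom k l (n - k - l) : ℂ) * E k ((w (σ 0) : ℂ) * y1) *
        E l ((w (σ 1) : ℂ) * y2) * altPowSum χ (n - k - l) (w (σ 2) * d - 1) *
        (w (σ 0) : ℂ) ^ (l + (n - k - l)) * (w (σ 1) : ℂ) ^ (k + (n - k - l)) *
        (w (σ 2) : ℂ) ^ (k + l))
    = ∑ k ∈ range (n + 1), ∑ l ∈ range (n + 1 - k),
      (multinom k l (n - k - l) : ℂ) * E k ((w 0 : ℂ) * y1) *
        E l ((w 1 : ℂ) * y2) * altPowSum χ (n - k - l) (w 2 * d - 1) *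
        (w 0 : ℂ) ^ (l + (n - k - l)) * (w 1 : ℂ) ^ (k + (n - k - l)) *
        (w 2 : ℂ) ^ (k + l) := by
  rw [tripleSum_eq_coeff (fun k => E k _) (fun l => E l _) (fun m => altPowSum χ m _),
    tripleSum_eq_coeff (fun k => E k _) (fun l => E l _) (fun m => altPowSum χ m _),
    egf_triple_eq_eulerNumer_mul_inv hd hper hE _ _ _ _ (hwodd _),
    egf_triple_eq_eulerNumer_mul_inv hd hper hE _ _ _ _ (hwodd _)]
  refine apply_perm_fin_three
    (fun a b c => (n ! : ℂ) * coeff n (eulerNumer χ d y1 y2 a b c * (eulerDenom d a b c)⁻¹))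
    (fun a b c => ?_) (fun a b c => ?_) w σ <;>
  · simp only [eulerNumer, eulerDenom]
    ring_nf

/-- Theorem 2: the triple sum with two generalized Euler polynomial factors and one
alternating generalized power sum factor is invariant under all six permutations of
`(w₁, w₂, w₃)` (all odd). -/
theorem stmt_1 (d : ℕ) (hd : Odd d) (hd0 : 0 < d) (χ : ℤ → ℂ)
    (hper : ∀ a : ℤ, χ (a + d) = χ a)
    (hmul : ∀ a b : ℤ, χ (a * b) = χ a * χ b) (hone : χ 1 = 1)
    (hvan : ∀ a : ℤ, 1 < Int.gcd a d → χ a = 0)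
    (E : ℕ → ℂ → ℂ) (hE : IsGenEuler d χ E)
    (w : Fin 3 → ℕ) (hw : ∀ i, 0 < w i) (hwodd : ∀ i, Odd (w i))
    (y1 y2 : ℂ) (n : ℕ) (σ : Equiv.Perm (Fin 3)) :
    (∑ k ∈ range (n + 1), ∑ l ∈ range (n + 1 - k),
      (multinom k l (n - k - l) : ℂ) * E k ((w (σ 0) : ℂ) * y1) *
        E l ((w (σ 1) : ℂ) * y2) * altPowSum χ (n - k - l) (w (σ 2) * d - 1) *
        (w (σ 0) : ℂ) ^ (l + (n - k - l)) * (w (σ 1) : ℂ) ^ (k + (n - k - l)) *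
        (w (σ 2) : ℂ) ^ (k + l))
    = ∑ k ∈ range (n + 1), ∑ l ∈ range (n + 1 - k),
      (multinom k l (n - k - l) : ℂ) * E k ((w 0 : ℂ) * y1) *
        E l ((w 1 : ℂ) * y2) * altPowSum χ (n - k - l) (w 2 * d - 1) *
        (w 0 : ℂ) ^ (l + (n - k - l)) * (w 1 : ℂ) ^ (k + (n - k - l)) *
        (w 2 : ℂ) ^ (k + l) :=
  stmt_1_general d hd χ hper E hE w hwodd y1 y2 n σ
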